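/- arXiv:2204.06474 — 2 statements merged into one kernel-verified Lean document; each statement's English description precedes it below -/
import Mathlib

section
/- Let $T > 0$, $\omega > 0$, and let $\varphi : [0,T] \to \mathbb{R}$ be twice continuously differentiable with $\varphi \ge 0$ and $\varphi''(t) \ge \omega^2 \varphi(t)$ for all $t \in (0,T)$. Then for every $t \in [0,T]$, $\varphi(t) \le \varphi(0) e^{-\omega t} + \varphi(T) e^{-\omega (T-t)}$. -/
/-!
Put `ψ t = φ 0 e^{-ωt} + φ T e^{-ω(T-t)}`, so that `ψ'' = ω² ψ` and, since `φ ≥ 0`, `φ ≤ ψ` at both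
endpoints. If `φ - ψ` had a positive value on `[0, T]`, its maximum would be attained at an
interior point `c`, where `(φ - ψ)''(c) ≥ ω² (φ - ψ)(c) > 0`; this contradicts the second
derivative test at a maximum.
-/

open Set Filter Topology Real

noncomputable def expBarrier (ω T A B t : ℝ) : ℝ := A * exp (-ω * t) + B * exp (-ω * (T - t))

theorem expBarrier_zero (ω T A B : ℝ) : expBarrier ω T A B 0 = A + B * exp (-ω * T) := by
  simp [expBarrier]

theorem expBarrier_self (ω T A B : ℝ) : expBarrier ω T A B T = A * exp (-ω * T) + B := by
  simp [expBarrier]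

theorem hasDerivAt_expBarrier (ω T A B t : ℝ) :
    HasDerivAt (expBarrier ω T A B) (ω * expBarrier ω T (-A) B t) t := by
  have hdecay := ((hasDerivAt_id t).const_mul (-ω)).exp.const_mul A
  have hgrowth := (((hasDerivAt_id t).const_sub T).const_mul (-ω)).exp.const_mul B
  exact (hdecay.add hgrowth).congr_deriv (by simp only [expBarrier, id]; ring)

theorem deriv_expBarrier (ω T A B : ℝ) :
    deriv (expBarrier ω T A B) = fun t => ω * expBarrier ω T (-A) B t :=
  funext fun t => (hasDerivAt_expBarrier ω T A B t).deriv

theorem differentiable_deriv_expBarrier (ω T A B : ℝ) :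
    Differentiable ℝ (deriv (expBarrier ω T A B)) := by
  rw [deriv_expBarrier]
  exact fun t => ((hasDerivAt_expBarrier ω T (-A) B t).const_mul ω).differentiableAt

theorem deriv_deriv_expBarrier (ω T A B t : ℝ) :
    deriv (deriv (expBarrier ω T A B)) t = ω ^ 2 * expBarrier ω T A B t := by
  rw [deriv_expBarrier, deriv_const_mul _ (hasDerivAt_expBarrier ω T (-A) B t).differentiableAt,
    (hasDerivAt_expBarrier ω T (-A) B t).deriv, neg_neg]
  ring

theorem deriv_deriv_sub {𝕜 F : Type*} [NontriviallyNormedField 𝕜] [NormedAddCommGroup F]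
    [NormedSpace 𝕜 F] {f g : 𝕜 → F} {x : 𝕜} (hf : Differentiable 𝕜 f) (hg : Differentiable 𝕜 g)
    (hf' : DifferentiableAt 𝕜 (deriv f) x) (hg' : DifferentiableAt 𝕜 (deriv g) x) :
    deriv (deriv (f - g)) x = deriv (deriv f) x - deriv (deriv g) x := by
  have hfirst : deriv (f - g) = deriv f - deriv g := funext fun y => deriv_sub (hf y) (hg y)
  rw [hfirst, deriv_sub hf' hg']

theorem IsLocalMax.deriv_deriv_nonpos {f : ℝ → ℝ} {c : ℝ} (hmax : IsLocalMax f c)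
    (hc : ContinuousAt f c) : deriv (deriv f) c ≤ 0 := by
  by_contra! hpos
  have hmin := isLocalMin_of_deriv_deriv_pos hpos hmax.deriv_eq_zero hc
  have hconst : f =ᶠ[𝓝 c] fun _ => f c := by
    filter_upwards [hmin, hmax] with x hx₁ hx₂ using le_antisymm hx₂ hx₁
  have hzero : deriv (deriv f) c = 0 := by
    rw [hconst.deriv.deriv_eq]
    simp
  exact hpos.ne' hzero

theorem nonpos_on_Icc_of_deriv_deriv_pos {f : ℝ → ℝ} {a b : ℝ} (hf : ContinuousOn f (Icc a b))
    (ha : f a ≤ 0) (hb : f b ≤ 0)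
    (hconvex : ∀ c ∈ Ioo a b, 0 < f c → 0 < deriv (deriv f) c) :
    ∀ t ∈ Icc a b, f t ≤ 0 := by
  intro t ht
  by_contra! hpos
  obtain ⟨c, hc, hmax⟩ := isCompact_Icc.exists_isMaxOn ⟨t, ht⟩ hf
  have hfc : 0 < f c := hpos.trans_le (hmax ht)
  have hcIoo : c ∈ Ioo a b :=
    ⟨hc.1.lt_of_ne (by rintro rfl; linarith), hc.2.lt_of_ne (by rintro rfl; linarith)⟩
  have hnhds : Icc a b ∈ 𝓝 c := Icc_mem_nhds hcIoo.1 hcIoo.2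
  exact ((hmax.isLocalMax hnhds).deriv_deriv_nonpos (hf.continuousAt hnhds)).not_gt
    (hconvex c hcIoo hfc)

theorem turnpike_ode_comparison (T ω : ℝ) (hT : 0 < T) (hω : 0 < ω)
    (φ : ℝ → ℝ) (hφ : ContDiff ℝ 2 φ)
    (hnonneg : ∀ t ∈ Set.Icc (0:ℝ) T, 0 ≤ φ t)
    (hineq : ∀ t ∈ Set.Ioo (0:ℝ) T, ω ^ 2 * φ t ≤ deriv (deriv φ) t) :
    ∀ t ∈ Set.Icc (0:ℝ) T,
      φ t ≤ φ 0 * Real.exp (-ω * t) + φ T * Real.exp (-ω * (T - t)) := by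
  set ψ := expBarrier ω T (φ 0) (φ T)
  have hφ₁ : Differentiable ℝ φ := hφ.differentiable two_ne_zero
  have hφ₂ : Differentiable ℝ (deriv φ) := (hφ.iterate_deriv' 1 1).differentiable one_ne_zero
  have hψ₁ : Differentiable ℝ ψ := fun s => (hasDerivAt_expBarrier ω T _ _ s).differentiableAt
  have hend₀ : (φ - ψ) 0 ≤ 0 := by
    have := mul_nonneg (hnonneg T ⟨hT.le, le_rfl⟩) (exp_pos (-ω * T)).le
    simp only [Pi.sub_apply, ψ, expBarrier_zero]
    linarith
  have hendT : (φ - ψ) T ≤ 0 := by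
    have := mul_nonneg (hnonneg 0 ⟨le_rfl, hT.le⟩) (exp_pos (-ω * T)).le
    simp only [Pi.sub_apply, ψ, expBarrier_self]
    linarith
  have hcont : ContinuousOn (φ - ψ) (Icc 0 T) := (hφ₁.continuous.sub hψ₁.continuous).continuousOn
  intro t ht
  refine sub_nonpos.mp
    (nonpos_on_Icc_of_deriv_deriv_pos hcont hend₀ hendT (fun c hc hpos => ?_) t ht)
  rw [deriv_deriv_sub hφ₁ hψ₁ (hφ₂ c) (differentiable_deriv_expBarrier ω T _ _ c),
    deriv_deriv_expBarrier]
  have hgap : 0 < ω ^ 2 * (φ c - ψ c) := mul_pos (pow_pos hω 2) hpos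
  linarith [hineq c hc]
end

section
/- Let $T > 0$, $\omega > 0$, and let $\varphi : [0,T] \to \mathbb{R}$ be twice continuously differentiable with $\varphi \ge 0$, $\varphi''(t) \ge \omega^2 \varphi(t)$ for all $t \in (0,T)$, and Robin boundary condition $\varphi'(T) \le -\omega \varphi(T)$. Then for every $t \in [0,T]$, $\varphi(t) \le \varphi(0) e^{-\omega t}$. -/
/-!
Put `ψ = φ' + ωφ`. Then `(e^{-ωt} ψ)' = e^{-ωt} (φ'' - ω²φ) ≥ 0`, so `e^{-ωt} ψ` is nondecreasing
and the Robin condition `ψ(T) ≤ 0` propagates backwards to `ψ ≤ 0` on `[0, T]`. Since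
`(e^{ωt} φ)' = e^{ωt} ψ`, the function `e^{ωt} φ` is then nonincreasing, which is the claim.
-/

open Real Set

theorem hasDerivAt_exp_mul_mul {u : ℝ → ℝ} {u' : ℝ} (c t : ℝ) (hu : HasDerivAt u u' t) :
    HasDerivAt (fun s => exp (c * s) * u s) (exp (c * t) * (u' + c * u t)) t := by
  have hexp : HasDerivAt (fun s => exp (c * s)) (exp (c * t) * c) t := by
    simpa using ((hasDerivAt_id t).const_mul c).exp
  exact (hexp.mul hu).congr_deriv (by ring)

theorem antitoneOn_exp_mul_of_deriv_add_mul_nonpos {u : ℝ → ℝ} {a b : ℝ} (c : ℝ)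
    (hcont : ContinuousOn u (Icc a b)) (hdiff : DifferentiableOn ℝ u (Ioo a b))
    (h : ∀ t ∈ Ioo a b, deriv u t + c * u t ≤ 0) :
    AntitoneOn (fun t => exp (c * t) * u t) (Icc a b) := by
  have hderiv : ∀ t ∈ Ioo a b,
      HasDerivAt (fun s => exp (c * s) * u s) (exp (c * t) * (deriv u t + c * u t)) t :=
    fun t ht => hasDerivAt_exp_mul_mul c t
      ((hdiff.differentiableAt (isOpen_Ioo.mem_nhds ht)).hasDerivAt)
  refine antitoneOn_of_deriv_nonpos (convex_Icc a b) ?_ ?_ ?_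
  · exact (continuous_exp.comp (continuous_const.mul continuous_id)).continuousOn.mul hcont
  · rw [interior_Icc]
    exact fun t ht => (hderiv t ht).differentiableAt.differentiableWithinAt
  · rw [interior_Icc]
    intro t ht
    rw [(hderiv t ht).deriv]
    exact mul_nonpos_of_nonneg_of_nonpos (exp_pos _).le (h t ht)

theorem le_mul_exp_of_deriv_add_mul_nonpos {u : ℝ → ℝ} {a b : ℝ} (c : ℝ)
    (hcont : ContinuousOn u (Icc a b)) (hdiff : DifferentiableOn ℝ u (Ioo a b))
    (h : ∀ t ∈ Ioo a b, deriv u t + c * u t ≤ 0) {t : ℝ} (ht : t ∈ Icc a b) :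
    u t ≤ u a * exp (-c * (t - a)) := by
  have hmono := antitoneOn_exp_mul_of_deriv_add_mul_nonpos c hcont hdiff h
    (left_mem_Icc.mpr (ht.1.trans ht.2)) ht ht.1
  calc u t = exp (-(c * t)) * (exp (c * t) * u t) := by
        rw [← mul_assoc, ← exp_add, neg_add_cancel, exp_zero, one_mul]
    _ ≤ exp (-(c * t)) * (exp (c * a) * u a) := by gcongr
    _ = u a * exp (-c * (t - a)) := by
        rw [mul_comm (u a), ← mul_assoc, ← exp_add]; ring_nf

theorem deriv_add_mul_nonpos_of_robin {φ : ℝ → ℝ} {a b ω : ℝ}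
    (hd1 : Differentiable ℝ φ) (hd2 : Differentiable ℝ (deriv φ))
    (hineq : ∀ t ∈ Ioo a b, ω ^ 2 * φ t ≤ deriv (deriv φ) t)
    (hrobin : deriv φ b ≤ -ω * φ b) :
    ∀ t ∈ Icc a b, deriv φ t + ω * φ t ≤ 0 := by
  set ψ : ℝ → ℝ := fun t => -(deriv φ t + ω * φ t) with hψ
  have hdψ : Differentiable ℝ ψ := (hd2.add (hd1.const_mul ω)).neg
  have hderivψ : ∀ t, deriv ψ t = -(deriv (deriv φ) t + ω * deriv φ t) := fun t =>
    (((hd2 t).hasDerivAt.add ((hd1 t).hasDerivAt.const_mul ω)).neg).deriv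
  intro t ht
  have hanti := antitoneOn_exp_mul_of_deriv_add_mul_nonpos (-ω) hdψ.continuous.continuousOn
    hdψ.differentiableOn (fun s hs => by rw [hderivψ]; linarith [hineq s hs])
    ht (right_mem_Icc.mpr (ht.1.trans ht.2)) ht.2
  have hψb : 0 ≤ exp (-ω * b) * ψ b := mul_nonneg (exp_pos _).le (by simp only [hψ]; linarith)
  have hψt : 0 ≤ ψ t := nonneg_of_mul_nonneg_right (hψb.trans hanti) (exp_pos _)
  simp only [hψ] at hψt
  linarith

theorem turnpike_ode_comparison_robin_general (T ω : ℝ)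
    (φ : ℝ → ℝ) (hφ : ContDiff ℝ 2 φ)
    (hineq : ∀ t ∈ Set.Ioo (0:ℝ) T, ω ^ 2 * φ t ≤ deriv (deriv φ) t)
    (hrobin : deriv φ T ≤ -ω * φ T) :
    ∀ t ∈ Set.Icc (0:ℝ) T, φ t ≤ φ 0 * Real.exp (-ω * t) := by
  have hd1 : Differentiable ℝ φ := hφ.differentiable (by norm_num)
  have hd2 : Differentiable ℝ (deriv φ) :=
    (hφ.iterate_deriv' 1 1).differentiable (by norm_num)
  intro t ht
  simpa using le_mul_exp_of_deriv_add_mul_nonpos ω hd1.continuous.continuousOn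
    hd1.differentiableOn
    (fun s hs => deriv_add_mul_nonpos_of_robin hd1 hd2 hineq hrobin s (Ioo_subset_Icc_self hs)) ht

theorem turnpike_ode_comparison_robin (T ω : ℝ) (hT : 0 < T) (hω : 0 < ω)
    (φ : ℝ → ℝ) (hφ : ContDiff ℝ 2 φ)
    (hnonneg : ∀ t ∈ Set.Icc (0:ℝ) T, 0 ≤ φ t)
    (hineq : ∀ t ∈ Set.Ioo (0:ℝ) T, ω ^ 2 * φ t ≤ deriv (deriv φ) t)
    (hrobin : deriv φ T ≤ -ω * φ T) :
    ∀ t ∈ Set.Icc (0:ℝ) T, φ t ≤ φ 0 * Real.exp (-ω * t) :=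
  turnpike_ode_comparison_robin_general T ω φ hφ hineq hrobin
end
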